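/- arXiv:1108.3802 — 6 statements merged into one kernel-verified Lean document; each statement's English description precedes it below -/
import Mathlib

section
/- Let n₁, n₂, n₃ be nonzero integers with |n₁|, |n₂|, |n₃| pairwise distinct and gcd(n₁,n₂,n₃) = 1, let m = gcd(n₂,n₃), and let r be a positive integer. Then sup_{(x,y)∈ℝ²} F(x,y) ≥ |n₃| / (2·(r·(|n₂|+|n₃|) + m·(|n₁|+|n₃|))). -/
/-!
At the point `(1/(2m), 0)` one has `Δ(0,t) = -t·m/n₃` and `Γ = (1/(2m) - s/m) - r·t/n₃`. The
half-integer offset keeps `1/(2m) - s/m` at distance at least `1/(2m)` from `0`, so a small `|t|`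
makes `|Γ|` large while a large `|t|` makes `|Δ|` large; balancing the two weighted terms of `F`
against each other in `|t|` gives exactly the bound. The supremum is finite since rounding `t`
and then `s` makes `|Δ| ≤ m/(2|n₃|)` and `|Γ| ≤ 1/(2m)`.
-/

/-- `Δ(y,t) = y - t·m/n₃`. -/
noncomputable def Delta (n₃ m : ℤ) (y : ℝ) (t : ℤ) : ℝ :=
  y - (t : ℝ) * (m : ℝ) / (n₃ : ℝ)

/-- `Γ(x,y,s,t) = (x - r·y/m) - s/m + (r/m)·Δ(y,t)`. -/
noncomputable def Gamma (n₃ r m : ℤ) (x y : ℝ) (s t : ℤ) : ℝ :=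
  (x - (r : ℝ) * y / (m : ℝ)) - (s : ℝ) / (m : ℝ) + ((r : ℝ) / (m : ℝ)) * Delta n₃ m y t

/-- `F(x,y) = inf_{s,t ∈ ℤ} max` of the three quantities from the Hare–Ramsey reduction. -/
noncomputable def Fval (n₁ n₂ n₃ r m : ℤ) (x y : ℝ) : ℝ :=
  ⨅ st : ℤ × ℤ,
    max (max ((|(n₃ : ℝ)| / (|(n₂ : ℝ)| + |(n₃ : ℝ)|)) * |Delta n₃ m y st.2|)
          ((|(n₃ : ℝ)| / (|(n₁ : ℝ)| + |(n₃ : ℝ)|)) * |Gamma n₃ r m x y st.1 st.2|))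
      (|(n₂ : ℝ) * Gamma n₃ r m x y st.1 st.2 - (n₁ : ℝ) * Delta n₃ m y st.2| /
        (|(n₁ : ℝ)| + |(n₂ : ℝ)|))

open Set

lemma Gamma_eq {n₃ r m : ℤ} (hm : (m : ℝ) ≠ 0) (x y : ℝ) (s t : ℤ) :
    Gamma n₃ r m x y s t = x - s / m - r * t / n₃ := by
  unfold Gamma Delta
  field_simp
  ring

lemma Fval_le_max_abs (n₁ n₂ n₃ r m : ℤ) (x y : ℝ) (s t : ℤ) :
    Fval n₁ n₂ n₃ r m x y ≤ max |Gamma n₃ r m x y s t| |Delta n₃ m y t| := by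
  set G := Gamma n₃ r m x y s t
  set D := Delta n₃ m y t
  have hweight : ∀ a b : ℝ, |a| / (|b| + |a|) ≤ 1 := fun a b =>
    div_le_one_of_le₀ (le_add_of_nonneg_left (abs_nonneg b)) (by positivity)
  refine (ciInf_le ⟨0, ?_⟩ (s, t)).trans (max_le (max_le ?_ ?_) ?_)
  · rintro _ ⟨st, rfl⟩
    exact (by positivity : (0 : ℝ) ≤ _).trans (le_max_right _ _)
  · exact (mul_le_of_le_one_left (abs_nonneg D) (hweight _ _)).trans (le_max_right _ _)
  · exact (mul_le_of_le_one_left (abs_nonneg G) (hweight _ _)).trans (le_max_left _ _)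
  · refine div_le_of_le_mul₀ (by positivity) (by positivity) ?_
    calc |(n₂ : ℝ) * G - n₁ * D| ≤ |(n₂ : ℝ)| * |G| + |(n₁ : ℝ)| * |D| := by
          simpa only [abs_mul] using abs_sub (n₂ * G : ℝ) (n₁ * D)
      _ ≤ |(n₂ : ℝ)| * max |G| |D| + |(n₁ : ℝ)| * max |G| |D| := by
          gcongr
          exacts [le_max_left _ _, le_max_right _ _]
      _ = max |G| |D| * (|(n₁ : ℝ)| + |(n₂ : ℝ)|) := by ring

lemma exists_abs_Delta_le {n₃ m : ℤ} (hn₃ : n₃ ≠ 0) (hm : m ≠ 0) (y : ℝ) :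
    ∃ t : ℤ, |Delta n₃ m y t| ≤ |(m : ℝ)| / (2 * |(n₃ : ℝ)|) := by
  have hn₃' : (n₃ : ℝ) ≠ 0 := by exact_mod_cast hn₃
  have hm' : (m : ℝ) ≠ 0 := by exact_mod_cast hm
  refine ⟨round (y * n₃ / m), ?_⟩
  have : Delta n₃ m y (round (y * n₃ / m)) = m / n₃ * (y * n₃ / m - round (y * n₃ / m)) := by
    unfold Delta
    field_simp
  calc |Delta n₃ m y (round (y * n₃ / m))|
      = |(m : ℝ)| * |y * n₃ / m - round (y * n₃ / m)| / |(n₃ : ℝ)| := by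
        rw [this, abs_mul, abs_div, div_mul_eq_mul_div]
    _ ≤ |(m : ℝ)| * (1 / 2) / |(n₃ : ℝ)| := by gcongr; exact abs_sub_round _
    _ = |(m : ℝ)| / (2 * |(n₃ : ℝ)|) := by ring

lemma exists_abs_Gamma_le {n₃ r m : ℤ} (hm : m ≠ 0) (x y : ℝ) (t : ℤ) :
    ∃ s : ℤ, |Gamma n₃ r m x y s t| ≤ 1 / (2 * |(m : ℝ)|) := by
  have hm' : (m : ℝ) ≠ 0 := by exact_mod_cast hm
  set u : ℝ := (x - r * t / n₃) * m
  refine ⟨round u, ?_⟩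
  have : Gamma n₃ r m x y (round u) t = (u - round u) / m := by
    rw [Gamma_eq hm']
    field_simp
    ring
  calc |Gamma n₃ r m x y (round u) t| = |u - round u| / |(m : ℝ)| := by rw [this, abs_div]
    _ ≤ 1 / 2 / |(m : ℝ)| := by gcongr; exact abs_sub_round u
    _ = 1 / (2 * |(m : ℝ)|) := by ring

lemma bddAbove_range_Fval (n₁ n₂ n₃ r m : ℤ) (hn₃ : n₃ ≠ 0) (hm : m ≠ 0) :
    BddAbove (range fun p : ℝ × ℝ => Fval n₁ n₂ n₃ r m p.1 p.2) := by
  refine ⟨max (1 / (2 * |(m : ℝ)|)) (|(m : ℝ)| / (2 * |(n₃ : ℝ)|)), ?_⟩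
  rintro _ ⟨⟨x, y⟩, rfl⟩
  obtain ⟨t, ht⟩ := exists_abs_Delta_le hn₃ hm y
  obtain ⟨s, hs⟩ := exists_abs_Gamma_le (r := r) hm x y t
  exact (Fval_le_max_abs n₁ n₂ n₃ r m x y s t).trans (max_le_max hs ht)

/-- The two expressions on the right cross at `T = c·A/m`, where `c` is the left-hand side, so `c`
is the minimum over `T` of their maximum. -/
lemma div_le_max_of_balance {a A B m r T : ℝ} (hA : 0 < A) (hB : 0 < B) (hm : 0 < m)
    (hr : 0 ≤ r) :
    a / (2 * (r * A + m * B)) ≤ max (m * T / A) ((a / (2 * m) - r * T) / B) := by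
  set c := a / (2 * (r * A + m * B))
  have hc : c * (2 * (r * A + m * B)) = a := div_mul_cancel₀ a (by positivity)
  by_contra! h
  have hT : m * T < c * A := (div_lt_iff₀ hA).mp (max_lt_iff.mp h).1
  have hrest : a / (2 * m) - r * T < c * B := (div_lt_iff₀ hB).mp (max_lt_iff.mp h).2
  rw [sub_lt_iff_lt_add, div_lt_iff₀ (by positivity)] at hrest
  nlinarith [mul_le_mul_of_nonneg_left hT.le hr]

lemma inv_two_mul_le_abs_sub_int_div {m : ℝ} (hm : 0 < m) (s : ℤ) :
    1 / (2 * m) ≤ |1 / (2 * m) - s / m| := by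
  have hodd : (1 : ℝ) ≤ |1 - 2 * (s : ℝ)| := by
    exact_mod_cast Int.one_le_abs (by omega : 1 - 2 * s ≠ 0)
  have : 1 / (2 * m) - s / m = (1 - 2 * s) / (2 * m) := by
    field_simp
  rw [this, abs_div, abs_of_pos (by positivity : (0 : ℝ) < 2 * m)]
  gcongr

lemma le_Fval_one_div_two_mul (n₁ n₂ n₃ r m : ℤ) (hn₃ : n₃ ≠ 0) (hm : 0 < m) (hr : 0 ≤ r) :
    |(n₃ : ℝ)| / (2 * (r * (|(n₂ : ℝ)| + |(n₃ : ℝ)|) + m * (|(n₁ : ℝ)| + |(n₃ : ℝ)|))) ≤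
      Fval n₁ n₂ n₃ r m (1 / (2 * m)) 0 := by
  have hn₃' : (0 : ℝ) < |(n₃ : ℝ)| := abs_pos.mpr (by exact_mod_cast hn₃)
  have hm' : (0 : ℝ) < m := by exact_mod_cast hm
  have hr' : (0 : ℝ) ≤ r := by exact_mod_cast hr
  refine le_ciInf fun ⟨s, t⟩ => ?_
  have hDelta : |(n₃ : ℝ)| / (|(n₂ : ℝ)| + |(n₃ : ℝ)|) * |Delta n₃ m 0 t| =
      m * |(t : ℝ)| / (|(n₂ : ℝ)| + |(n₃ : ℝ)|) := by
    rw [Delta, zero_sub, abs_neg, abs_div, abs_mul, abs_of_pos hm']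
    field_simp
  have hGamma_ge : 1 / (2 * m) - r * |(t : ℝ)| / |(n₃ : ℝ)| ≤
      |Gamma n₃ r m (1 / (2 * m)) 0 s t| := by
    rw [Gamma_eq hm'.ne']
    calc 1 / (2 * m) - r * |(t : ℝ)| / |(n₃ : ℝ)|
        ≤ |1 / (2 * (m : ℝ)) - s / m| - |r * t / (n₃ : ℝ)| := by
          rw [abs_div, abs_mul, abs_of_nonneg hr']
          linarith [inv_two_mul_le_abs_sub_int_div hm' s]
      _ ≤ _ := abs_sub_abs_le_abs_sub _ _
  have hGamma : (|(n₃ : ℝ)| / (2 * m) - r * |(t : ℝ)|) / (|(n₁ : ℝ)| + |(n₃ : ℝ)|) ≤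
      |(n₃ : ℝ)| / (|(n₁ : ℝ)| + |(n₃ : ℝ)|) * |Gamma n₃ r m (1 / (2 * m)) 0 s t| := by
    rw [div_mul_eq_mul_div]
    gcongr
    calc |(n₃ : ℝ)| / (2 * m) - r * |(t : ℝ)|
        = |(n₃ : ℝ)| * (1 / (2 * m) - r * |(t : ℝ)| / |(n₃ : ℝ)|) := by field_simp
      _ ≤ _ := by gcongr
  calc _ ≤ max (m * |(t : ℝ)| / (|(n₂ : ℝ)| + |(n₃ : ℝ)|))
        ((|(n₃ : ℝ)| / (2 * m) - r * |(t : ℝ)|) / (|(n₁ : ℝ)| + |(n₃ : ℝ)|)) :=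
        div_le_max_of_balance (by positivity) (by positivity) hm' hr'
    _ ≤ _ := (max_le_max hDelta.ge hGamma).trans (le_max_left _ _)

theorem lower_bound_sup_F_general (n₁ n₂ n₃ : ℤ) (hn₃ : n₃ ≠ 0)
    (m : ℤ) (hm : m = Int.gcd n₂ n₃) (r : ℤ) (hr : 0 < r) :
    (⨆ p : ℝ × ℝ, Fval n₁ n₂ n₃ r m p.1 p.2) ≥
      |(n₃ : ℝ)| /
        (2 * ((r : ℝ) * (|(n₂ : ℝ)| + |(n₃ : ℝ)|) + (m : ℝ) * (|(n₁ : ℝ)| + |(n₃ : ℝ)|))) := by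
  have hm_pos : 0 < m := hm ▸ Int.natCast_pos.mpr (Int.gcd_pos_of_ne_zero_right n₂ hn₃)
  exact (le_Fval_one_div_two_mul n₁ n₂ n₃ r m hn₃ hm_pos hr.le).trans
    (le_ciSup (bddAbove_range_Fval n₁ n₂ n₃ r m hn₃ hm_pos.ne') ((1 / (2 * m), 0) : ℝ × ℝ))

theorem lower_bound_sup_F (n₁ n₂ n₃ : ℤ) (hn₁ : n₁ ≠ 0) (hn₂ : n₂ ≠ 0) (hn₃ : n₃ ≠ 0)
    (h12 : |n₁| ≠ |n₂|) (h13 : |n₁| ≠ |n₃|) (h23 : |n₂| ≠ |n₃|)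
    (hgcd : Int.gcd n₁ (Int.gcd n₂ n₃) = 1)
    (m : ℤ) (hm : m = Int.gcd n₂ n₃) (r : ℤ) (hr : 0 < r) :
    (⨆ p : ℝ × ℝ, Fval n₁ n₂ n₃ r m p.1 p.2) ≥
      |(n₃ : ℝ)| /
        (2 * ((r : ℝ) * (|(n₂ : ℝ)| + |(n₃ : ℝ)|) + (m : ℝ) * (|(n₁ : ℝ)| + |(n₃ : ℝ)|))) :=
  lower_bound_sup_F_general n₁ n₂ n₃ hn₃ m hm r hr
end

section
/- Let n₁, n₂, n₃ be nonzero integers with |n₁|, |n₂|, |n₃| pairwise distinct and gcd(n₁,n₂,n₃) = 1, let m = gcd(n₂,n₃), and let r be a positive integer. Set E₁ = max( m/(2(|n₂|+|n₃|)), r/(2(|n₁|+|n₃|)), (|n₃|+2rm)/(2(r(|n₂|+|n₃|)+m(|n₁|+|n₃|))) ). Then sup_{(x,y)∈ℝ²} F(x,y) ≤ E₁·(2|n₁||n₂| + |n₃|·(|n₁|+|n₂|)) / (|n₃|·(|n₁|+|n₂|)). -/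
/-!
Since `Γ(x,y,s,t) = x - s/m - r t/n₃`, it suffices to find integers `t, s` with
`|y - t m/n₃| ≤ U` and `|x - s/m - r t/n₃| ≤ V` for the radii `U = E₁(|n₂|+|n₃|)/|n₃|`,
`V = E₁(|n₁|+|n₃|)/|n₃|`, at which all three terms of `F` are at most the bound. The admissible
`t` fill a window of length `2U|n₃|/m`, and the points `r t/n₃` are spaced `r/|n₃| ≤ 2V` apart,
so their `V`-neighbourhoods form an interval of length `≥ 1/m` (this is what `E₁` is designed
for), which meets `x + (1/m)ℤ`.
-/

lemma exists_int_abs_sub_le_and_abs_mul_sub_int_le_of_pos {A P Q : ℝ} (hA : 0 < A)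
    (hP : 1 / 2 ≤ P) (hQ : A / 2 ≤ Q) (hPQ : 1 / 2 ≤ A * (P - 1) + Q) (X Y : ℝ) :
    ∃ t n : ℤ, |t - Y| ≤ P ∧ |t * A - X - n| ≤ Q := by
  -- `n` puts `X + n` in `[T A - Q, T A - Q + 1)`, and `k` is the least `t` with `t A ≥ X + n - Q`
  set T : ℤ := ⌈Y - P⌉
  set n : ℤ := ⌈T * A - Q - X⌉
  set k : ℤ := ⌈(X + n - Q) / A⌉
  have hT₁ : Y - P ≤ T := Int.le_ceil _
  have hT₂ : (T : ℝ) < Y - P + 1 := Int.ceil_lt_add_one _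
  have hn₁ : T * A - Q - X ≤ n := Int.le_ceil _
  have hn₂ : (n : ℝ) < T * A - Q - X + 1 := Int.ceil_lt_add_one _
  have hk₁ : X + n - Q ≤ k * A := (div_le_iff₀ hA).1 (Int.le_ceil _)
  have hk₂ : k * A < X + n - Q + A := by
    have := (Int.ceil_lt_add_one ((X + n - Q) / A)).trans_eq (div_add_one hA.ne')
    exact (lt_div_iff₀ hA).1 this
  refine ⟨max T k, n, ?_⟩
  rcases le_total k T with hkT | hTk
  · have hkT' : (k : ℝ) * A ≤ T * A := by gcongr
    rw [max_eq_left hkT, abs_le, abs_le]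
    exact ⟨⟨by linarith, by linarith⟩, by linarith, by linarith⟩
  · have hkT : ((k : ℝ) - T) * A < (2 * P - 1) * A := by nlinarith
    have hkT' : (k : ℝ) - T < 2 * P - 1 := lt_of_mul_lt_mul_right hkT hA.le
    have hTk' : (T : ℝ) ≤ k := by exact_mod_cast hTk
    rw [max_eq_right hTk, abs_le, abs_le]
    refine ⟨⟨?_, ?_⟩, ?_, ?_⟩ <;> linarith

lemma exists_int_abs_sub_le_and_abs_mul_sub_int_le {A P Q : ℝ} (hA : A ≠ 0)
    (hP : 1 / 2 ≤ P) (hQ : |A| / 2 ≤ Q) (hPQ : 1 / 2 ≤ |A| * (P - 1) + Q) (X Y : ℝ) :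
    ∃ t n : ℤ, |t - Y| ≤ P ∧ |t * A - X - n| ≤ Q := by
  rcases hA.lt_or_gt with hneg | hpos
  · rw [abs_of_neg hneg] at hQ hPQ
    obtain ⟨t, n, ht, hn⟩ :=
      exists_int_abs_sub_le_and_abs_mul_sub_int_le_of_pos (neg_pos.2 hneg) hP hQ hPQ X (-Y)
    refine ⟨-t, n, ?_, ?_⟩
    · rwa [Int.cast_neg, ← abs_neg, neg_sub', neg_neg]
    · rwa [Int.cast_neg, neg_mul_comm]
  · rw [abs_of_pos hpos] at hQ hPQ
    exact exists_int_abs_sub_le_and_abs_mul_sub_int_le_of_pos hpos hP hQ hPQ X Y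

lemma Gamma_eq_sub_sub (n₃ r : ℤ) {m : ℤ} (hm : m ≠ 0) (x y : ℝ) (s t : ℤ) :
    Gamma n₃ r m x y s t = x - s / m - t * r / n₃ := by
  have hm' : (m : ℝ) ≠ 0 := by exact_mod_cast hm
  unfold Gamma Delta
  field_simp
  ring

lemma exists_abs_Delta_le_and_abs_Gamma_le {n₃ r m : ℤ} (hn₃ : n₃ ≠ 0) (hm : 0 < m) (hr : 0 < r)
    {U V : ℝ} (hU : m / (2 * |(n₃ : ℝ)|) ≤ U) (hV : r / (2 * |(n₃ : ℝ)|) ≤ V)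
    (hUV : 1 / 2 + r * m / |(n₃ : ℝ)| ≤ r * U + m * V) (x y : ℝ) :
    ∃ s t : ℤ, |Delta n₃ m y t| ≤ U ∧ |Gamma n₃ r m x y s t| ≤ V := by
  have hn₃' : (n₃ : ℝ) ≠ 0 := by exact_mod_cast hn₃
  have ha : 0 < |(n₃ : ℝ)| := abs_pos.2 hn₃'
  have hm' : (0 : ℝ) < m := by exact_mod_cast hm
  have habsA : |(r * m / n₃ : ℝ)| = r * m / |(n₃ : ℝ)| := by
    rw [abs_div, abs_of_pos (by positivity : (0 : ℝ) < r * m)]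
  obtain ⟨t, n, ht, hn⟩ := exists_int_abs_sub_le_and_abs_mul_sub_int_le
    (A := r * m / n₃) (P := U * |(n₃ : ℝ)| / m) (Q := m * V) (by positivity)
    (by rw [le_div_iff₀ hm']; linarith [(div_le_iff₀ (by positivity)).1 hU])
    (by rw [habsA, div_div, div_le_iff₀ (by positivity)]
        nlinarith [mul_le_mul_of_nonneg_left ((div_le_iff₀ (by positivity)).1 hV) hm'.le])
    (by rw [habsA, show r * m / |(n₃ : ℝ)| * (U * |(n₃ : ℝ)| / m - 1) + m * V
          = r * U + m * V - r * m / |(n₃ : ℝ)| by field_simp; ring]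
        linarith)
    (m * x) (y * n₃ / m)
  refine ⟨-n, t, ?_, ?_⟩
  · have hΔ : Delta n₃ m y t = -(m / n₃) * (t - y * n₃ / m) := by
      unfold Delta; field_simp; ring
    calc |Delta n₃ m y t| = m / |(n₃ : ℝ)| * |t - y * n₃ / m| := by
          rw [hΔ, abs_mul, abs_neg, abs_div, abs_of_pos hm']
      _ ≤ m / |(n₃ : ℝ)| * (U * |(n₃ : ℝ)| / m) := by gcongr
      _ = U := by field_simp
  · have hΓ : Gamma n₃ r m x y (-n) t = -(1 / m) * (t * (r * m / n₃) - m * x - n) := by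
      rw [Gamma_eq_sub_sub n₃ r hm.ne']; field_simp; push_cast; ring
    calc |Gamma n₃ r m x y (-n) t| = 1 / m * |t * (r * m / n₃) - m * x - n| := by
          rw [hΓ, abs_mul, abs_neg, abs_div, abs_one, abs_of_pos hm']
      _ ≤ 1 / m * (m * V) := by gcongr
      _ = V := by field_simp

lemma Fval_le_of_abs_le (n₁ n₂ : ℤ) {n₃ r m : ℤ} {x y U V : ℝ} {s t : ℤ}
    (hΔ : |Delta n₃ m y t| ≤ U) (hΓ : |Gamma n₃ r m x y s t| ≤ V) :
    Fval n₁ n₂ n₃ r m x y ≤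
      max (max (|(n₃ : ℝ)| / (|(n₂ : ℝ)| + |(n₃ : ℝ)|) * U)
          (|(n₃ : ℝ)| / (|(n₁ : ℝ)| + |(n₃ : ℝ)|) * V))
        ((|(n₂ : ℝ)| * V + |(n₁ : ℝ)| * U) / (|(n₁ : ℝ)| + |(n₂ : ℝ)|)) := by
  refine (ciInf_le ⟨0, ?_⟩ (s, t)).trans ?_
  · rintro _ ⟨st, rfl⟩
    exact le_max_of_le_right (by positivity)
  have hmix : |(n₂ : ℝ) * Gamma n₃ r m x y s t - n₁ * Delta n₃ m y t| ≤
      |(n₂ : ℝ)| * V + |(n₁ : ℝ)| * U :=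
    calc _ ≤ |(n₂ : ℝ) * Gamma n₃ r m x y s t| + |(n₁ : ℝ) * Delta n₃ m y t| := abs_sub _ _
      _ ≤ |(n₂ : ℝ)| * V + |(n₁ : ℝ)| * U := by rw [abs_mul, abs_mul]; gcongr
  exact max_le_max (max_le_max (by gcongr) (by gcongr)) (by gcongr)

lemma div_two_mul_le_mul_div {a c D E : ℝ} (hc : 0 < c) (hD : 0 < D) (h : a / (2 * D) ≤ E) :
    a / (2 * c) ≤ E * D / c :=
  calc a / (2 * c) = a / (2 * D) * D / c := by field_simp
    _ ≤ E * D / c := by gcongr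

lemma max_terms_at_radii_le {a₁ a₂ a₃ E : ℝ} (ha₁ : 0 ≤ a₁) (ha₂ : 0 < a₂) (ha₃ : 0 < a₃)
    (hE : 0 ≤ E) :
    max (max (a₃ / (a₂ + a₃) * (E * (a₂ + a₃) / a₃)) (a₃ / (a₁ + a₃) * (E * (a₁ + a₃) / a₃)))
        ((a₂ * (E * (a₁ + a₃) / a₃) + a₁ * (E * (a₂ + a₃) / a₃)) / (a₁ + a₂)) ≤
      E * (2 * a₁ * a₂ + a₃ * (a₁ + a₂)) / (a₃ * (a₁ + a₂)) := by
  have h₁ : a₃ / (a₂ + a₃) * (E * (a₂ + a₃) / a₃) = E := by field_simp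
  have h₂ : a₃ / (a₁ + a₃) * (E * (a₁ + a₃) / a₃) = E := by field_simp
  have h₃ : (a₂ * (E * (a₁ + a₃) / a₃) + a₁ * (E * (a₂ + a₃) / a₃)) / (a₁ + a₂) =
      E * (2 * a₁ * a₂ + a₃ * (a₁ + a₂)) / (a₃ * (a₁ + a₂)) := by
    field_simp; ring
  have hle : E ≤ E * (2 * a₁ * a₂ + a₃ * (a₁ + a₂)) / (a₃ * (a₁ + a₂)) := by
    rw [le_div_iff₀ (by positivity)]
    nlinarith [mul_nonneg (mul_nonneg hE ha₁) ha₂.le]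
  rw [h₁, h₂, h₃, max_self]
  exact max_le hle le_rfl

theorem upper_bound_sup_F_general (n₁ n₂ n₃ : ℤ) (hn₂ : n₂ ≠ 0) (hn₃ : n₃ ≠ 0)
    (m : ℤ) (hm : m = Int.gcd n₂ n₃) (r : ℤ) (hr : 0 < r)
    (E₁ : ℝ)
    (hE₁ : E₁ = max (max ((m : ℝ) / (2 * (|(n₂ : ℝ)| + |(n₃ : ℝ)|)))
            ((r : ℝ) / (2 * (|(n₁ : ℝ)| + |(n₃ : ℝ)|))))
          ((|(n₃ : ℝ)| + 2 * (r : ℝ) * (m : ℝ)) /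
            (2 * ((r : ℝ) * (|(n₂ : ℝ)| + |(n₃ : ℝ)|) + (m : ℝ) * (|(n₁ : ℝ)| + |(n₃ : ℝ)|))))) :
    (⨆ p : ℝ × ℝ, Fval n₁ n₂ n₃ r m p.1 p.2) ≤
      E₁ * (2 * |(n₁ : ℝ)| * |(n₂ : ℝ)| + |(n₃ : ℝ)| * (|(n₁ : ℝ)| + |(n₂ : ℝ)|)) /
        (|(n₃ : ℝ)| * (|(n₁ : ℝ)| + |(n₂ : ℝ)|)) := by
  have hm₀ : 0 < m := hm ▸ Int.natCast_pos.2 (Int.gcd_pos_of_ne_zero_right _ hn₃)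
  set a₁ := |(n₁ : ℝ)|
  set a₂ := |(n₂ : ℝ)|
  set a₃ := |(n₃ : ℝ)|
  have ha₁ : 0 ≤ a₁ := abs_nonneg _
  have ha₂ : 0 < a₂ := abs_pos.2 (by exact_mod_cast hn₂)
  have ha₃ : 0 < a₃ := abs_pos.2 (by exact_mod_cast hn₃)
  have hE₁₁ : m / (2 * (a₂ + a₃)) ≤ E₁ := hE₁ ▸ le_max_of_le_left (le_max_left _ _)
  have hE₁₂ : r / (2 * (a₁ + a₃)) ≤ E₁ := hE₁ ▸ le_max_of_le_left (le_max_right _ _)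
  have hE₁₃ : (a₃ + 2 * r * m) / (2 * (r * (a₂ + a₃) + m * (a₁ + a₃))) ≤ E₁ :=
    hE₁ ▸ le_max_right _ _
  have hUV : 1 / 2 + r * m / a₃ ≤ r * (E₁ * (a₂ + a₃) / a₃) + m * (E₁ * (a₁ + a₃) / a₃) :=
    calc 1 / 2 + r * m / a₃ = (a₃ + 2 * r * m) / (2 * a₃) := by field_simp
      _ ≤ E₁ * (r * (a₂ + a₃) + m * (a₁ + a₃)) / a₃ :=
          div_two_mul_le_mul_div ha₃ (by positivity) hE₁₃
      _ = _ := by ring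
  refine ciSup_le fun p => ?_
  obtain ⟨s, t, hΔ, hΓ⟩ := exists_abs_Delta_le_and_abs_Gamma_le hn₃ hm₀ hr
    (div_two_mul_le_mul_div ha₃ (by positivity) hE₁₁)
    (div_two_mul_le_mul_div ha₃ (by positivity) hE₁₂) hUV p.1 p.2
  exact (Fval_le_of_abs_le n₁ n₂ hΔ hΓ).trans <|
    max_terms_at_radii_le ha₁ ha₂ ha₃ ((by positivity : (0 : ℝ) ≤ m / (2 * (a₂ + a₃))).trans hE₁₁)

theorem upper_bound_sup_F (n₁ n₂ n₃ : ℤ) (hn₁ : n₁ ≠ 0) (hn₂ : n₂ ≠ 0) (hn₃ : n₃ ≠ 0)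
    (h12 : |n₁| ≠ |n₂|) (h13 : |n₁| ≠ |n₃|) (h23 : |n₂| ≠ |n₃|)
    (hgcd : Int.gcd n₁ (Int.gcd n₂ n₃) = 1)
    (m : ℤ) (hm : m = Int.gcd n₂ n₃) (r : ℤ) (hr : 0 < r)
    (E₁ : ℝ)
    (hE₁ : E₁ = max (max ((m : ℝ) / (2 * (|(n₂ : ℝ)| + |(n₃ : ℝ)|)))
            ((r : ℝ) / (2 * (|(n₁ : ℝ)| + |(n₃ : ℝ)|))))
          ((|(n₃ : ℝ)| + 2 * (r : ℝ) * (m : ℝ)) /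
            (2 * ((r : ℝ) * (|(n₂ : ℝ)| + |(n₃ : ℝ)|) + (m : ℝ) * (|(n₁ : ℝ)| + |(n₃ : ℝ)|))))) :
    (⨆ p : ℝ × ℝ, Fval n₁ n₂ n₃ r m p.1 p.2) ≤
      E₁ * (2 * |(n₁ : ℝ)| * |(n₂ : ℝ)| + |(n₃ : ℝ)| * (|(n₁ : ℝ)| + |(n₂ : ℝ)|)) /
        (|(n₃ : ℝ)| * (|(n₁ : ℝ)| + |(n₂ : ℝ)|)) :=
  upper_bound_sup_F_general n₁ n₂ n₃ hn₂ hn₃ m hm r hr E₁ hE₁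
end

section
/- Let n₁, n₂, n₃ be nonzero integers and let r, m be positive integers. Set E₁ = max( m/(2(|n₂|+|n₃|)), r/(2(|n₁|+|n₃|)), (|n₃|+2rm)/(2(r(|n₂|+|n₃|)+m(|n₁|+|n₃|))) ). Then for every (x,y) ∈ ℝ² there exist integers s and t such that |Δ(y,t)| ≤ E₁·(|n₂|+|n₃|)/|n₃| and |Γ(x,y,s,t)| ≤ E₁·(|n₁|+|n₃|)/|n₃|. -/
theorem exists_int_abs_sub_le_and_abs_sub_le {α : Type*} [CommRing α] [LinearOrder α]
    [IsStrictOrderedRing α] [FloorRing α] {p q L₁ L₂ : α} (h₁ : 1 ≤ 2 * L₁) (h₂ : 1 ≤ 2 * L₂)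
    (h : 1 + |p - q| ≤ L₁ + L₂) : ∃ t : ℤ, |p - t| ≤ L₁ ∧ |q - t| ≤ L₂ := by
  set a := max (p - L₁) (q - L₂)
  obtain ⟨hp, hq⟩ := max_le_iff.mp (Int.le_ceil a)
  have hlt : (⌈a⌉ : α) - 1 < a := sub_lt_iff_lt_add.mpr (Int.ceil_lt_add_one a)
  obtain ⟨hpq, hqp⟩ := abs_le.mp (le_sub_iff_add_le'.mpr h)
  refine ⟨⌈a⌉, abs_le.mpr ⟨?_, ?_⟩, abs_le.mpr ⟨?_, ?_⟩⟩ <;>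
    rcases lt_max_iff.mp hlt with h' | h' <;> linarith

theorem half_le_mul_div_of_div_two_mul_le {a b E : ℝ} (ha : 0 < a) (hb : 0 < b)
    (h : a / (2 * b) ≤ E) : 1 / 2 ≤ E * b / a := by
  rw [div_le_iff₀ (by positivity)] at h
  rw [le_div_iff₀ ha]
  linarith

theorem one_add_div_le_add_of_div_le {N r m A B E : ℝ} (hr : 0 < r) (hm : 0 < m) (hA : 0 < A)
    (hB : 0 < B) (h : (N + 2 * r * m) / (2 * (r * B + m * A)) ≤ E) :
    1 + N / (2 * r * m) ≤ E * B / m + E * A / r :=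
  calc 1 + N / (2 * r * m)
      = (N + 2 * r * m) / (2 * (r * B + m * A)) * (r * B + m * A) / (r * m) := by
        field_simp; ring
    _ ≤ E * (r * B + m * A) / (r * m) := by gcongr
    _ = E * B / m + E * A / r := by field_simp

theorem abs_div_mul_le_div_abs {a N u X : ℝ} (ha : 0 < a) (h : |u| ≤ X / a) :
    |a / N * u| ≤ X / |N| := by
  rw [abs_mul, abs_div, abs_of_pos ha]
  calc a / |N| * |u| ≤ a / |N| * (X / a) := by gcongr
    _ = X / |N| := by field_simp

section

variable {n₃ r m : ℤ} (x y : ℝ) (s t : ℤ)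

theorem Delta_eq_mul_sub (hn₃ : n₃ ≠ 0) (hm : m ≠ 0) :
    Delta n₃ m y t = m / n₃ * (y * n₃ / m - t) := by
  unfold Delta
  field_simp

theorem Gamma_eq_mul_sub (hn₃ : n₃ ≠ 0) (hr : r ≠ 0) (hm : m ≠ 0) :
    Gamma n₃ r m x y s t =
      r / n₃ * (y * n₃ / m + n₃ / (r * m) * (m * (x - r * y / m) - s) - t) := by
  unfold Gamma Delta
  field_simp
  ring

end

theorem exists_s_t_small_Delta_Gamma_general (n₁ n₂ n₃ : ℤ)
    (hn₃ : n₃ ≠ 0) (r m : ℤ) (hr : 0 < r) (hm : 0 < m)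
    (E₁ : ℝ)
    (hE₁ : E₁ = max (max ((m : ℝ) / (2 * (|(n₂ : ℝ)| + |(n₃ : ℝ)|)))
            ((r : ℝ) / (2 * (|(n₁ : ℝ)| + |(n₃ : ℝ)|))))
          ((|(n₃ : ℝ)| + 2 * (r : ℝ) * (m : ℝ)) /
            (2 * ((r : ℝ) * (|(n₂ : ℝ)| + |(n₃ : ℝ)|) + (m : ℝ) * (|(n₁ : ℝ)| + |(n₃ : ℝ)|))))) :
    ∀ x y : ℝ, ∃ s t : ℤ,
      |Delta n₃ m y t| ≤ E₁ * (|(n₂ : ℝ)| + |(n₃ : ℝ)|) / |(n₃ : ℝ)| ∧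
      |Gamma n₃ r m x y s t| ≤ E₁ * (|(n₁ : ℝ)| + |(n₃ : ℝ)|) / |(n₃ : ℝ)| := by
  intro x y
  have hr' : (0 : ℝ) < r := Int.cast_pos.mpr hr
  have hm' : (0 : ℝ) < m := Int.cast_pos.mpr hm
  have hn₃' : (0 : ℝ) < |(n₃ : ℝ)| := abs_pos.mpr (Int.cast_ne_zero.mpr hn₃)
  have hL₁ := half_le_mul_div_of_div_two_mul_le hm' (by positivity)
    (hE₁ ▸ le_max_of_le_left (le_max_left _ _))
  have hL₂ := half_le_mul_div_of_div_two_mul_le hr' (by positivity)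
    (hE₁ ▸ le_max_of_le_left (le_max_right _ _))
  have hL := one_add_div_le_add_of_div_le hr' hm' (by positivity) (by positivity)
    (hE₁ ▸ le_max_right _ _)
  set c := (m : ℝ) * (x - r * y / m)
  set p := y * n₃ / m
  set q := p + n₃ / (r * m) * (c - round c)
  have hpq : |p - q| ≤ |(n₃ : ℝ)| / (2 * r * m) := by
    rw [sub_add_cancel_left, abs_neg, abs_mul, abs_div, abs_of_pos (by positivity : (0 : ℝ) < r * m)]
    calc |(n₃ : ℝ)| / (r * m) * |c - round c| ≤ |(n₃ : ℝ)| / (r * m) * (1 / 2) := by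
          gcongr; exact abs_sub_round c
      _ = |(n₃ : ℝ)| / (2 * r * m) := by ring
  obtain ⟨t, hpt, hqt⟩ := exists_int_abs_sub_le_and_abs_sub_le
    (L₁ := E₁ * (|(n₂ : ℝ)| + |(n₃ : ℝ)|) / m) (L₂ := E₁ * (|(n₁ : ℝ)| + |(n₃ : ℝ)|) / r)
    (by linarith) (by linarith) ((add_le_add_right hpq 1).trans hL)
  refine ⟨round c, t, ?_, ?_⟩
  · rw [Delta_eq_mul_sub y t hn₃ hm.ne']
    exact abs_div_mul_le_div_abs hm' hpt
  · rw [Gamma_eq_mul_sub x y _ t hn₃ hr.ne' hm.ne']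
    exact abs_div_mul_le_div_abs hr' hqt

theorem exists_s_t_small_Delta_Gamma (n₁ n₂ n₃ : ℤ) (hn₁ : n₁ ≠ 0) (hn₂ : n₂ ≠ 0)
    (hn₃ : n₃ ≠ 0) (r m : ℤ) (hr : 0 < r) (hm : 0 < m)
    (E₁ : ℝ)
    (hE₁ : E₁ = max (max ((m : ℝ) / (2 * (|(n₂ : ℝ)| + |(n₃ : ℝ)|)))
            ((r : ℝ) / (2 * (|(n₁ : ℝ)| + |(n₃ : ℝ)|))))
          ((|(n₃ : ℝ)| + 2 * (r : ℝ) * (m : ℝ)) /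
            (2 * ((r : ℝ) * (|(n₂ : ℝ)| + |(n₃ : ℝ)|) + (m : ℝ) * (|(n₁ : ℝ)| + |(n₃ : ℝ)|))))) :
    ∀ x y : ℝ, ∃ s t : ℤ,
      |Delta n₃ m y t| ≤ E₁ * (|(n₂ : ℝ)| + |(n₃ : ℝ)|) / |(n₃ : ℝ)| ∧
      |Gamma n₃ r m x y s t| ≤ E₁ * (|(n₁ : ℝ)| + |(n₃ : ℝ)|) / |(n₃ : ℝ)| :=
  exists_s_t_small_Delta_Gamma_general n₁ n₂ n₃ hn₃ r m hr hm E₁ hE₁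
end

section
/- Let n₁ be a nonzero integer and n₂, n₃ positive integers with |n₁| < n₂ < n₃, and let r, m be integers with r ≥ 1 and m ≥ 1. If r + m ≥ 5, then (2|n₁|·n₂ + n₃·(|n₁| + n₂)) / ((|n₁| + n₂)·(r·(n₂ + n₃) + m·(|n₁| + n₃))) ≤ 5/16. -/
/-! Write `a = |n₁|`, `b = n₂`, `c = n₃`. Since `a ≤ b` and `r ≥ 0`, the second factor of the
denominator is at least `(r + m)(a + c) ≥ 5(a + c)`, and what remains is the polynomial
inequality `16(2ab + c(a + b)) ≤ 25(a + b)(a + c)`, valid for `0 ≤ a`, `0 ≤ b ≤ c`. -/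

section OrderedField

variable {𝕜 : Type*} [Field 𝕜] [LinearOrder 𝕜] [IsStrictOrderedRing 𝕜]

lemma mul_add_le_mul_add_add_mul_add {a b c k r m : 𝕜} (hab : a ≤ b) (hac : 0 ≤ a + c)
    (hr : 0 ≤ r) (hk : k ≤ r + m) :
    k * (a + c) ≤ r * (b + c) + m * (a + c) :=
  calc k * (a + c) ≤ (r + m) * (a + c) := mul_le_mul_of_nonneg_right hk hac
    _ = r * (a + c) + m * (a + c) := add_mul r m (a + c)
    _ ≤ r * (b + c) + m * (a + c) := by gcongr

lemma sixteen_mul_le_twentyFive_mul {a b c : 𝕜} (ha : 0 ≤ a) (hb : 0 ≤ b) (hbc : b ≤ c) :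
    16 * (2 * a * b + c * (a + b)) ≤ 25 * ((a + b) * (a + c)) := by
  -- the difference is 25a² + 2ab + 9bc + 9a(c - b)
  nlinarith [mul_nonneg ha hb, mul_nonneg hb (hb.trans hbc), mul_nonneg ha (sub_nonneg.2 hbc)]

theorem div_le_five_div_sixteen {a b c r m : 𝕜} (ha : 0 ≤ a) (hab : a < b) (hbc : b ≤ c)
    (hr : 0 ≤ r) (hrm : 5 ≤ r + m) :
    (2 * a * b + c * (a + b)) / ((a + b) * (r * (b + c) + m * (a + c))) ≤ 5 / 16 := by
  have hb : 0 < b := ha.trans_lt hab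
  have hac : 0 < a + c := by linarith
  have hden := mul_add_le_mul_add_add_mul_add hab.le hac.le hr hrm
  rw [div_le_iff₀ (mul_pos (by positivity) ((mul_pos (by norm_num) hac).trans_le hden))]
  calc 2 * a * b + c * (a + b) ≤ 25 / 16 * ((a + b) * (a + c)) := by
        linarith [sixteen_mul_le_twentyFive_mul ha hb.le hbc]
    _ = 5 / 16 * ((a + b) * (5 * (a + c))) := by ring
    _ ≤ 5 / 16 * ((a + b) * (r * (b + c) + m * (a + c))) := by gcongr

end OrderedField

theorem lemma_ii_general (n₁ n₂ n₃ : ℤ) (h12 : |n₁| < n₂) (h23 : n₂ < n₃)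
    (r m : ℤ) (hr : 1 ≤ r) (hrm : 5 ≤ r + m) :
    (2 * (|n₁| : ℝ) * (n₂ : ℝ) + (n₃ : ℝ) * ((|n₁| : ℝ) + (n₂ : ℝ))) /
      (((|n₁| : ℝ) + (n₂ : ℝ)) *
        ((r : ℝ) * ((n₂ : ℝ) + (n₃ : ℝ)) + (m : ℝ) * ((|n₁| : ℝ) + (n₃ : ℝ)))) ≤ 5 / 16 :=
  div_le_five_div_sixteen (by positivity) (by exact_mod_cast h12) (by exact_mod_cast h23.le)
    (by exact_mod_cast (zero_lt_one.trans_le hr).le) (by exact_mod_cast hrm)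

theorem lemma_ii (n₁ n₂ n₃ : ℤ) (hn₁ : n₁ ≠ 0) (h12 : |n₁| < n₂) (h23 : n₂ < n₃)
    (r m : ℤ) (hr : 1 ≤ r) (hm : 1 ≤ m) (hrm : 5 ≤ r + m) :
    (2 * (|n₁| : ℝ) * (n₂ : ℝ) + (n₃ : ℝ) * ((|n₁| : ℝ) + (n₂ : ℝ))) /
      (((|n₁| : ℝ) + (n₂ : ℝ)) *
        ((r : ℝ) * ((n₂ : ℝ) + (n₃ : ℝ)) + (m : ℝ) * ((|n₁| : ℝ) + (n₃ : ℝ)))) ≤ 5 / 16 :=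
  lemma_ii_general n₁ n₂ n₃ h12 h23 r m hr hrm
end

section
/- Let n₁ be a nonzero integer and n₂, n₃ positive integers with |n₁| < n₂ < n₃, and let r, m be integers with r ≥ 1 and m ≥ 1. If (r, m) ≠ (1, 1), then (2|n₁|·n₂ + n₃·(|n₁| + n₂))·(2 + min(r, m)) / (4·(|n₁| + n₂)·(r·(n₂ + n₃) + m·(|n₁| + n₃))) ≤ 5/16. -/
/-!
Write `a = |n₁|`, `b = n₂`, `c = n₃`. Since `4ab ≤ (a + b)²`, the first factor of the numerator
is at most `(a + b)(a + b + 2c) / 2`, and the factor `a + b` cancels against the denominator.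
What remains, `2 (2 + min r m) (a + b + 2c) ≤ 5 (r (b + c) + m (a + c))`, follows from
`r, m ≥ min r m` when `min r m ≥ 2`, and otherwise from `max r m ≥ 2`.
-/

theorem two_mul_two_add_min_mul_le {a b c r m : ℝ} (ha : 0 ≤ a) (hb : 0 ≤ b) (hac : a ≤ c)
    (hbc : b ≤ c) (hr : 1 ≤ r) (hm : 1 ≤ m) (h2 : 2 ≤ r ∨ 2 ≤ m) :
    2 * (2 + min r m) * (a + b + 2 * c) ≤ 5 * (r * (b + c) + m * (a + c)) := by
  wlog hrm : r ≤ m generalizing a b r m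
  · have := this hb ha hbc hac hm hr h2.symm (le_of_not_ge hrm)
    rw [min_comm]
    linarith
  rw [min_eq_left hrm]
  have hac' : 0 ≤ a + c := by linarith
  rcases h2 with hr2 | hm2
  · nlinarith [mul_le_mul_of_nonneg_left hrm hac']
  · nlinarith [mul_le_mul_of_nonneg_left hm2 hac', mul_le_mul_of_nonneg_left hrm hac',
      mul_le_mul_of_nonneg_left hr (by linarith : 0 ≤ c - b)]

theorem ratio_le_five_div_sixteen {a b c r m : ℝ} (ha : 0 ≤ a) (hb : 0 < b) (hac : a ≤ c)
    (hbc : b ≤ c) (hr : 1 ≤ r) (hm : 1 ≤ m) (h2 : 2 ≤ r ∨ 2 ≤ m) :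
    (2 * a * b + c * (a + b)) * (2 + min r m) / (4 * (a + b) * (r * (b + c) + m * (a + c)))
      ≤ 5 / 16 := by
  have hS : 0 < a + b := by linarith
  have hW : 0 < r * (b + c) + m * (a + c) := by
    have : 0 < b + c := by linarith
    have : 0 ≤ a + c := by linarith
    positivity
  have hnum : 2 * (2 * a * b + c * (a + b)) ≤ (a + b) * (a + b + 2 * c) := by
    linear_combination four_mul_le_sq_add a b
  have hP := mul_le_mul_of_nonneg_right hnum
    (by linarith [le_min hr hm] : 0 ≤ 2 * (2 + min r m))
  have hQ := mul_le_mul_of_nonneg_left (two_mul_two_add_min_mul_le ha hb.le hac hbc hr hm h2) hS.le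
  rw [div_le_iff₀ (by positivity)]
  linear_combination (hP + hQ) / 4

theorem lemma_iii_general (n₁ n₂ n₃ : ℤ) (h12 : |n₁| < n₂) (h23 : n₂ < n₃)
    (r m : ℤ) (hr : 1 ≤ r) (hm : 1 ≤ m) (hrm : (r, m) ≠ (1, 1)) :
    (2 * (|n₁| : ℝ) * (n₂ : ℝ) + (n₃ : ℝ) * ((|n₁| : ℝ) + (n₂ : ℝ))) * (2 + (min r m : ℝ)) /
      (4 * ((|n₁| : ℝ) + (n₂ : ℝ)) *
        ((r : ℝ) * ((n₂ : ℝ) + (n₃ : ℝ)) + (m : ℝ) * ((|n₁| : ℝ) + (n₃ : ℝ)))) ≤ 5 / 16 := by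
  have h2 : 2 ≤ r ∨ 2 ≤ m := by
    by_contra! h
    exact hrm (Prod.ext (by omega) (by omega))
  have ha : (0 : ℝ) ≤ |(n₁ : ℝ)| := abs_nonneg _
  have hab : |(n₁ : ℝ)| < n₂ := by exact_mod_cast h12
  have hbc : (n₂ : ℝ) < n₃ := by exact_mod_cast h23
  exact ratio_le_five_div_sixteen ha (ha.trans_lt hab) (hab.trans hbc).le hbc.le
    (by exact_mod_cast hr) (by exact_mod_cast hm) (by exact_mod_cast h2)

theorem lemma_iii (n₁ n₂ n₃ : ℤ) (hn₁ : n₁ ≠ 0) (h12 : |n₁| < n₂) (h23 : n₂ < n₃)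
    (r m : ℤ) (hr : 1 ≤ r) (hm : 1 ≤ m) (hrm : (r, m) ≠ (1, 1)) :
    (2 * (|n₁| : ℝ) * (n₂ : ℝ) + (n₃ : ℝ) * ((|n₁| : ℝ) + (n₂ : ℝ))) * (2 + (min r m : ℝ)) /
      (4 * ((|n₁| : ℝ) + (n₂ : ℝ)) *
        ((r : ℝ) * ((n₂ : ℝ) + (n₃ : ℝ)) + (m : ℝ) * ((|n₁| : ℝ) + (n₃ : ℝ)))) ≤ 5 / 16 :=
  lemma_iii_general n₁ n₂ n₃ h12 h23 r m hr hm hrm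
end

section
/- Let S = {n₁, n₂, n₃} be a set of three distinct nonzero integers. If S is not of the form {−n, n, 2n} for some integer n, then the angular Kronecker constant satisfies α(S) ≤ 5/16. -/
/-- Distance from a real number to the nearest integer. -/
noncomputable def distNearestInt (t : ℝ) : ℝ := ⨅ k : ℤ, |t - (k : ℝ)|

/-- The angular Kronecker constant of a finite set of integers: the infimum of all `ε ≥ 0`
such that every target `φ : ℤ → ℝ` can be interpolated to within `ε` (in the distance to the
nearest integer) by some `x ∈ ℝ` on the set `S`. -/
noncomputable def angularKronecker (S : Finset ℤ) : ℝ :=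
  sInf {ε : ℝ | 0 ≤ ε ∧ ∀ φ : ℤ → ℝ, ∃ x : ℝ, ∀ n ∈ S, distNearestInt ((n : ℝ) * x - φ n) ≤ ε}

/-!
Replacing each `n` by `|n|` (and its target by the negative when `n < 0`) reduces the problem to
positive frequencies `a, b ≤ c`. For two frequencies `a, b` with `g = gcd a b`, the line
`x ↦ (a x, b x)` on the torus comes within `(ra, rb)` of every point as soon as
`g ≤ 2 (ra b + rb a)`: write `a = g α`, `b = g β` and use a Bézout relation for `α, β`.

If `a ≠ b`, solve the first two frequencies with radii `5/16 - 3a/(16c)` and `5/16 - 3b/(16c)`,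
then move `x` by at most `3/(16c)` to bring `c x` within `5/16` of its target; the gcd condition
`8 c g ≤ 5 c (a + b) - 6 a b` holds because either `g = a` and `b ≥ 2a`, or `2g ≤ a`.
If `a = b`, replace its two targets by the midpoint of the shorter arc joining them, at distance
`d/2 ≤ 1/4`, and solve `a, c` with radii `5/16 - d/2` and `5/16`; this needs
`8 gcd a c ≤ 5a + c`, which fails only for `c ∈ {a, 2a}`.
-/

lemma distNearestInt_le_abs_sub (t : ℝ) (k : ℤ) : distNearestInt t ≤ |t - k| :=
  ciInf_le ⟨0, by rintro _ ⟨i, rfl⟩; exact abs_nonneg _⟩ k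

lemma distNearestInt_eq_abs_sub_round (t : ℝ) : distNearestInt t = |t - round t| :=
  le_antisymm (distNearestInt_le_abs_sub t _) (le_ciInf (round_le t))

lemma distNearestInt_le_abs (t : ℝ) : distNearestInt t ≤ |t| := by
  simpa using distNearestInt_le_abs_sub t 0

lemma distNearestInt_neg_le (t : ℝ) : distNearestInt (-t) ≤ distNearestInt t := by
  rw [distNearestInt_eq_abs_sub_round t, ← abs_neg]
  simpa [neg_add_eq_sub] using distNearestInt_le_abs_sub (-t) (-round t)

lemma distNearestInt_neg (t : ℝ) : distNearestInt (-t) = distNearestInt t :=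
  le_antisymm (distNearestInt_neg_le t) (by simpa using distNearestInt_neg_le (-t))

lemma distNearestInt_add_le (s t : ℝ) :
    distNearestInt (s + t) ≤ distNearestInt s + distNearestInt t := by
  rw [distNearestInt_eq_abs_sub_round s, distNearestInt_eq_abs_sub_round t]
  calc distNearestInt (s + t) ≤ |s + t - ((round s + round t : ℤ) : ℝ)| :=
        distNearestInt_le_abs_sub _ _
    _ = |(s - round s) + (t - round t)| := by push_cast; ring_nf
    _ ≤ |s - round s| + |t - round t| := abs_add_le _ _

lemma distNearestInt_add_le_abs (s t : ℝ) : distNearestInt (s + t) ≤ distNearestInt s + |t| :=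
  (distNearestInt_add_le s t).trans (by gcongr; exact distNearestInt_le_abs t)

lemma exists_midpoint (ψ ψ' : ℝ) : ∃ μ : ℝ, ∀ t : ℝ,
    distNearestInt (t - ψ) ≤ distNearestInt (t - μ) + distNearestInt (ψ - ψ') / 2 ∧
    distNearestInt (t - ψ') ≤ distNearestInt (t - μ) + distNearestInt (ψ - ψ') / 2 := by
  set k := round (ψ - ψ')
  set w := ψ - ψ' - k
  have hw : distNearestInt (ψ - ψ') = |w| := distNearestInt_eq_abs_sub_round _
  refine ⟨ψ - w / 2, fun t => ⟨?_, ?_⟩⟩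
  · calc distNearestInt (t - ψ) = distNearestInt ((t - (ψ - w / 2)) + -(w / 2)) := by ring_nf
      _ ≤ distNearestInt (t - (ψ - w / 2)) + |-(w / 2)| := distNearestInt_add_le_abs _ _
      _ = _ := by rw [hw, abs_neg, abs_div, abs_two]
  · calc distNearestInt (t - ψ') ≤ distNearestInt (t - (ψ - w / 2)) + distNearestInt (w / 2 + k) :=
          by convert distNearestInt_add_le _ _ using 2; ring
      _ ≤ distNearestInt (t - (ψ - w / 2)) + |w / 2 + k - k| := by
          gcongr; exact distNearestInt_le_abs_sub _ _
      _ = _ := by rw [hw, add_sub_cancel_right, abs_div, abs_two]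

lemma exists_abs_le_distNearestInt_add_le (y : ℝ) {r : ℝ} (hr₀ : 0 ≤ r) (hr : r ≤ 1 / 2) :
    ∃ s : ℝ, |s| ≤ r ∧ distNearestInt (y + s) ≤ 1 / 2 - r := by
  set w := y - round y
  have hw : |w| ≤ 1 / 2 := abs_sub_round y
  refine ⟨-(2 * r * w), ?_, ?_⟩
  · rw [abs_neg, abs_mul, abs_of_nonneg (by positivity : 0 ≤ 2 * r)]
    nlinarith
  · calc distNearestInt (y + -(2 * r * w)) ≤ |y + -(2 * r * w) - round y| :=
          distNearestInt_le_abs_sub _ _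
      _ = (1 - 2 * r) * |w| := by
          rw [← abs_of_nonneg (by linarith : 0 ≤ 1 - 2 * r), ← abs_mul]
          congr 1; simp only [w]; ring
      _ ≤ 1 / 2 - r := by nlinarith [abs_nonneg w]

lemma exists_approx_pair_of_isCoprime {α β : ℤ} (hα : 0 < α) (hαβ : IsCoprime α β)
    {ra rb : ℝ} (hra : 0 ≤ ra) (hrb : 0 ≤ rb) (h : 1 ≤ 2 * (ra * β + rb * α)) (ψa ψb : ℝ) :
    ∃ y : ℝ, distNearestInt (α * y - ψa) ≤ ra ∧ distNearestInt (β * y - ψb) ≤ rb := by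
  obtain ⟨u, v, huv⟩ := hαβ
  have hαR : (0 : ℝ) < α := by exact_mod_cast hα
  set N := round (α * ψb - β * ψa)
  set δ := (N : ℝ) - (α * ψb - β * ψa)
  have hδ : |δ| ≤ 1 / 2 := by rw [abs_sub_comm]; exact abs_sub_round _
  set D := ra * β + rb * α
  have hD : 0 < D := by linarith
  -- split the defect `δ` between the two frequencies in the ratio `ra * β : rb * α`
  set s := -(ra * δ / D)
  have hs : |s| ≤ ra := by
    rw [abs_neg, abs_div, abs_mul, abs_of_nonneg hra, abs_of_pos hD, div_le_iff₀ hD]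
    nlinarith [abs_nonneg δ]
  have hβs : |β * s + δ| ≤ α * rb := by
    have : β * s + δ = rb * α * δ / D := by
      rw [eq_div_iff hD.ne']; simp only [s]; field_simp; simp only [D]; ring
    rw [this, abs_div, abs_mul, abs_of_nonneg (by positivity), abs_of_pos hD, div_le_iff₀ hD]
    nlinarith [abs_nonneg δ, mul_nonneg hrb hαR.le]
  set y := (ψa + s + (N * v : ℤ)) / α
  have hαy : α * y = ψa + s + (N * v : ℤ) := by simp only [y]; field_simp
  refine ⟨y, ?_, ?_⟩
  · calc distNearestInt (α * y - ψa) ≤ |α * y - ψa - (N * v : ℤ)| := distNearestInt_le_abs_sub _ _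
      _ = |s| := by rw [hαy]; ring_nf
      _ ≤ ra := hs
  · have key : α * (β * y - ψb - (-(N * u) : ℤ)) = β * s + δ := by
      have huvR : (u : ℝ) * α + v * β = 1 := by exact_mod_cast huv
      simp only [δ]; push_cast at hαy ⊢
      linear_combination (β : ℝ) * hαy + (N : ℝ) * huvR
    calc distNearestInt (β * y - ψb) ≤ |β * y - ψb - (-(N * u) : ℤ)| :=
          distNearestInt_le_abs_sub _ _
      _ = |β * s + δ| / α := by rw [← key, abs_mul, abs_of_pos hαR, mul_div_cancel_left₀ _ hαR.ne']
      _ ≤ rb := by rw [div_le_iff₀ hαR]; linarith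

lemma exists_approx_pair {a b : ℤ} (ha : 0 < a) {ra rb : ℝ} (hra : 0 ≤ ra) (hrb : 0 ≤ rb)
    (h : (Int.gcd a b : ℝ) ≤ 2 * (ra * b + rb * a)) (ψa ψb : ℝ) :
    ∃ x : ℝ, distNearestInt (a * x - ψa) ≤ ra ∧ distNearestInt (b * x - ψb) ≤ rb := by
  obtain ⟨g, α, β, hg, hαβ, rfl, rfl⟩ := Int.exists_gcd_one' (Int.gcd_pos_of_ne_zero_left b ha.ne')
  have hgR : (0 : ℝ) < g := by exact_mod_cast hg
  rw [Int.gcd_mul_right, hαβ, one_mul, Int.natAbs_natCast] at h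
  push_cast at h
  obtain ⟨y, hya, hyb⟩ := exists_approx_pair_of_isCoprime
    (pos_of_mul_pos_left ha (by positivity)) (Int.isCoprime_iff_gcd_eq_one.mpr hαβ) hra hrb
    (le_of_mul_le_mul_left (by linarith) hgR) ψa ψb
  refine ⟨y / g, ?_, ?_⟩ <;> push_cast <;> rwa [mul_assoc, mul_div_cancel₀ _ hgR.ne']

lemma two_mul_le_of_dvd_of_ne {d n : ℤ} (hn : 0 < n) (hd : d ∣ n) (hne : d ≠ n) : 2 * d ≤ n := by
  obtain ⟨k, rfl⟩ := hd
  rcases le_or_gt d 0 with h | h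
  · linarith
  · have hk : 0 < k := pos_of_mul_pos_right hn h.le
    have hk1 : k ≠ 1 := by rintro rfl; simp at hne
    nlinarith [show 2 ≤ k by omega]

lemma eight_mul_gcd_le_of_ne {a b c : ℤ} (ha : 0 < a) (hb : 0 < b) (hab : a ≠ b) (hac : a ≤ c)
    (hbc : b ≤ c) : 8 * c * Int.gcd a b ≤ 5 * c * (a + b) - 6 * a * b := by
  wlog hlt : a < b generalizing a b
  · have := this hb ha hab.symm hbc hac (by omega)
    rw [Int.gcd_comm]; linarith
  have hg : (Int.gcd a b : ℤ) ≤ a := Int.le_of_dvd ha (Int.gcd_dvd_left _ _)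
  by_cases hga : (Int.gcd a b : ℤ) = a
  · have h2ab : 2 * a ≤ b := two_mul_le_of_dvd_of_ne (by omega) (hga ▸ (Int.gcd_dvd_right _ _)) hab
    rw [hga]
    nlinarith [mul_le_mul_of_nonneg_left hbc (by omega : (0 : ℤ) ≤ 5 * b - 3 * a)]
  · have h2g := two_mul_le_of_dvd_of_ne ha (Int.gcd_dvd_left _ _) hga
    nlinarith [mul_le_mul_of_nonneg_left hbc ha.le, mul_le_mul_of_nonneg_left hac hb.le]

lemma eight_mul_gcd_le_of_ne_two_mul {n m : ℤ} (hn : 0 < n) (hm : 0 < m) (hmn : m ≠ n)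
    (hm2n : m ≠ 2 * n) : 8 * Int.gcd n m ≤ 5 * n + m := by
  have hg : (Int.gcd n m : ℤ) ≤ n := Int.le_of_dvd hn (Int.gcd_dvd_left _ _)
  by_cases hgn : (Int.gcd n m : ℤ) = n
  · have hnm : n ∣ m := hgn ▸ Int.gcd_dvd_right _ _
    have := Int.le_of_dvd hm hnm
    have hdvd : n ∣ m - n := dvd_sub hnm dvd_rfl
    have := two_mul_le_of_dvd_of_ne (by omega) hdvd (by omega)
    omega
  · have := two_mul_le_of_dvd_of_ne hn (Int.gcd_dvd_left _ _) hgn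
    omega

lemma distNearestInt_mul_add_sub_le (n : ℤ) (x t ψ : ℝ) :
    distNearestInt (n * (x + t) - ψ) ≤ distNearestInt (n * x - ψ) + |n * t| := by
  convert distNearestInt_add_le_abs (n * x - ψ) (n * t) using 2; ring

lemma exists_approx_of_ne {a b c : ℤ} (ha : 0 < a) (hb : 0 < b) (hab : a ≠ b) (hac : a ≤ c)
    (hbc : b ≤ c) (ψa ψb ψc : ℝ) :
    ∃ x : ℝ, distNearestInt (a * x - ψa) ≤ 5 / 16 ∧ distNearestInt (b * x - ψb) ≤ 5 / 16 ∧
      distNearestInt (c * x - ψc) ≤ 5 / 16 := by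
  have hcR : (0 : ℝ) < c := by exact_mod_cast ha.trans_le hac
  have hacR : (a : ℝ) ≤ c := by exact_mod_cast hac
  have hbcR : (b : ℝ) ≤ c := by exact_mod_cast hbc
  have hgcd : (8 * c * Int.gcd a b : ℝ) ≤ 5 * c * (a + b) - 6 * a * b := by
    exact_mod_cast eight_mul_gcd_le_of_ne ha hb hab hac hbc
  obtain ⟨x, hxa, hxb⟩ := exists_approx_pair ha (ra := 5 / 16 - 3 * a / (16 * c))
    (rb := 5 / 16 - 3 * b / (16 * c))
    (by rw [sub_nonneg, div_le_iff₀ (by positivity)]; linarith)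
    (by rw [sub_nonneg, div_le_iff₀ (by positivity)]; linarith)
    (by
      rw [show 2 * ((5 / 16 - 3 * a / (16 * c)) * b + (5 / 16 - 3 * b / (16 * c)) * a) =
        (5 * c * (a + b) - 6 * a * b : ℝ) / (8 * c) by field_simp; ring,
        le_div_iff₀ (by positivity)]
      linarith) ψa ψb
  obtain ⟨s, hs, hcs⟩ := exists_abs_le_distNearestInt_add_le (c * x - ψc) (r := 3 / 16)
    (by norm_num) (by norm_num)
  have hmove (n : ℤ) (hn : 0 < n) : |n * (s / c)| ≤ 3 * n / (16 * c) := by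
    have hnR : (0 : ℝ) < n := by exact_mod_cast hn
    calc |n * (s / c)| = n * |s| / c := by
          rw [abs_mul, abs_div, abs_of_pos hnR, abs_of_pos hcR]; ring
      _ ≤ n * (3 / 16) / c := by gcongr
      _ = 3 * n / (16 * c) := by ring
  refine ⟨x + s / c, ?_, ?_, ?_⟩
  · linarith [distNearestInt_mul_add_sub_le a x (s / c) ψa, hmove a ha]
  · linarith [distNearestInt_mul_add_sub_le b x (s / c) ψb, hmove b hb]
  · convert hcs using 2 <;> [skip; norm_num]
    field_simp; ring

lemma exists_approx_of_eq {n m : ℤ} (hn : 0 < n) (hm : 0 < m) (hmn : m ≠ n) (hm2n : m ≠ 2 * n)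
    (ψ ψ' ψm : ℝ) :
    ∃ x : ℝ, distNearestInt (n * x - ψ) ≤ 5 / 16 ∧ distNearestInt (n * x - ψ') ≤ 5 / 16 ∧
      distNearestInt (m * x - ψm) ≤ 5 / 16 := by
  obtain ⟨μ, hμ⟩ := exists_midpoint ψ ψ'
  set d := distNearestInt (ψ - ψ')
  have hd : d = |ψ - ψ' - round (ψ - ψ')| := distNearestInt_eq_abs_sub_round _
  have hd2 : d ≤ 1 / 2 := hd ▸ abs_sub_round _
  have hmR : (0 : ℝ) < m := by exact_mod_cast hm
  have hgcd : (8 * Int.gcd n m : ℝ) ≤ 5 * n + m := by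
    exact_mod_cast eight_mul_gcd_le_of_ne_two_mul hn hm hmn hm2n
  obtain ⟨x, hxn, hxm⟩ := exists_approx_pair hn (b := m) (ra := 5 / 16 - d / 2) (rb := 5 / 16)
    (by linarith) (by norm_num) (by linarith [mul_le_mul_of_nonneg_right hd2 hmR.le]) μ ψm
  exact ⟨x, by linarith [(hμ (n * x)).1], by linarith [(hμ (n * x)).2], hxm⟩

lemma exists_approx_of_le {a b c : ℤ} (ha : 0 < a) (hb : 0 < b) (hac : a ≤ c) (hbc : b ≤ c)
    (hrep : a = b → c ≠ a ∧ c ≠ 2 * a) (ψa ψb ψc : ℝ) :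
    ∃ x : ℝ, distNearestInt (a * x - ψa) ≤ 5 / 16 ∧ distNearestInt (b * x - ψb) ≤ 5 / 16 ∧
      distNearestInt (c * x - ψc) ≤ 5 / 16 := by
  by_cases hab : a = b
  · subst hab
    exact exists_approx_of_eq ha (ha.trans_le hac) (hrep rfl).1 (hrep rfl).2 ψa ψb ψc
  · exact exists_approx_of_ne ha hb hab hac hbc ψa ψb ψc

lemma angularKronecker_le {S : Finset ℤ} {ε : ℝ} (hε : 0 ≤ ε)
    (h : ∀ φ : ℤ → ℝ, ∃ x : ℝ, ∀ n ∈ S, distNearestInt (n * x - φ n) ≤ ε) :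
    angularKronecker S ≤ ε :=
  csInf_le ⟨0, fun _ hδ => hδ.1⟩ ⟨hε, h⟩

lemma exists_approx_of_abs {S : Finset ℤ} {ε : ℝ}
    (h : ∀ ψ : ℤ → ℝ, ∃ x : ℝ, ∀ n ∈ S, distNearestInt (|n| * x - ψ n) ≤ ε) (φ : ℤ → ℝ) :
    ∃ x : ℝ, ∀ n ∈ S, distNearestInt (n * x - φ n) ≤ ε := by
  obtain ⟨x, hx⟩ := h fun n => if 0 ≤ n then φ n else -φ n
  refine ⟨x, fun n hn => ?_⟩
  have hxn := hx n hn
  split_ifs at hxn with hn0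
  · rwa [abs_of_nonneg hn0] at hxn
  · rw [abs_of_neg (not_le.mp hn0), ← distNearestInt_neg] at hxn
    convert hxn using 2
    push_cast; ring

lemma abs_ne_of_abs_eq_abs {n₁ n₂ n₃ : ℤ} (h12 : n₁ ≠ n₂) (h13 : n₁ ≠ n₃) (h23 : n₂ ≠ n₃)
    (hform : ¬ ∃ n : ℤ, ({n₁, n₂, n₃} : Finset ℤ) = {-n, n, 2 * n}) (h : |n₁| = |n₂|) :
    |n₃| ≠ |n₁| ∧ |n₃| ≠ 2 * |n₁| := by
  obtain rfl : n₂ = -n₁ := by rcases abs_eq_abs.mp h with h | h <;> omega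
  refine ⟨fun h3 => by rcases abs_eq_abs.mp h3 with h3 | h3 <;> omega, fun h3 => hform ?_⟩
  rw [← abs_two, ← abs_mul] at h3
  rcases abs_eq_abs.mp h3 with h3 | h3
  · exact ⟨n₁, by ext; simp only [Finset.mem_insert, Finset.mem_singleton]; omega⟩
  · exact ⟨-n₁, by ext; simp only [Finset.mem_insert, Finset.mem_singleton]; omega⟩

theorem alpha_le_five_sixteenths (n₁ n₂ n₃ : ℤ)
    (hn₁ : n₁ ≠ 0) (hn₂ : n₂ ≠ 0) (hn₃ : n₃ ≠ 0)
    (h12 : n₁ ≠ n₂) (h13 : n₁ ≠ n₃) (h23 : n₂ ≠ n₃)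
    (hform : ¬ ∃ n : ℤ, ({n₁, n₂, n₃} : Finset ℤ) = {-n, n, 2 * n}) :
    angularKronecker {n₁, n₂, n₃} ≤ 5 / 16 := by
  wlog hmax : |n₁| ≤ |n₃| ∧ |n₂| ≤ |n₃| generalizing n₁ n₂ n₃
  · rcases le_total |n₂| |n₁| with h | h
    · have e : ({n₃, n₂, n₁} : Finset ℤ) = {n₁, n₂, n₃} := by
        ext; simp only [Finset.mem_insert, Finset.mem_singleton]; tauto
      rw [← e] at hform ⊢
      exact this n₃ n₂ n₁ hn₃ hn₂ hn₁ h23.symm h13.symm h12.symm hform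
        ⟨by by_contra; exact hmax ⟨by linarith, by linarith⟩, h⟩
    · have e : ({n₁, n₃, n₂} : Finset ℤ) = {n₁, n₂, n₃} := by
        ext; simp only [Finset.mem_insert, Finset.mem_singleton]; tauto
      rw [← e] at hform ⊢
      exact this n₁ n₃ n₂ hn₁ hn₃ hn₂ h13 h12 h23.symm hform
        ⟨h, by by_contra; exact hmax ⟨by linarith, by linarith⟩⟩
  refine angularKronecker_le (by norm_num) (exists_approx_of_abs fun ψ => ?_)
  obtain ⟨x, hx₁, hx₂, hx₃⟩ := exists_approx_of_le (abs_pos.mpr hn₁) (abs_pos.mpr hn₂) hmax.1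
    hmax.2 (abs_ne_of_abs_eq_abs h12 h13 h23 hform) (ψ n₁) (ψ n₂) (ψ n₃)
  refine ⟨x, ?_⟩
  simp only [Finset.mem_insert, Finset.mem_singleton]
  rintro n (rfl | rfl | rfl) <;> assumption
end
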